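/- arXiv:2604.10826 — 2 statements merged into one kernel-verified Lean document; each statement's English description precedes it below -/
import Mathlib

section
/- Assume κ is an infinite cardinal with κ^{<κ} = κ. If P(F*_κ) satisfies the κ^{++}-chain condition, then 2^κ = κ^+. -/
/-!
For `x ⊆ κ` let `T_x` be the tree of all nodes whose value at each odd coordinate `2j+1` is
`1` or `0` according as `j ∈ x`, with no constraint at the other coordinates. At even levels,
in particular at all limit levels, `T_x` splits into all of `κ`; this makes `T_x` a condition
whose splitting histories are closed. For `x ≠ y` the trees `T_x` and `T_y` disagree at some
coordinate `< κ`, and every condition has nodes above it, so they are incompatible. Hence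
`P(F*_κ)` has an antichain of size `2^κ`, and the `κ^{++}`-chain condition forces
`2^κ ≤ κ^+`.
-/

open Cardinal Set

universe u

/-- A node of the tree `^{<κ}κ`: a function from an ordinal `dom < κ` (identified with
`κ.ord`) to ordinals `< κ.ord`, normalized to take value `0` outside its domain. -/
structure KNode (κ : Cardinal.{u}) : Type (u + 1) where
  dom : Ordinal.{u}
  dom_lt : dom < κ.ord
  val : Ordinal.{u} → Ordinal.{u}
  val_lt : ∀ i, i < dom → val i < κ.ord
  val_zero : ∀ i, ¬ i < dom → val i = 0

namespace KNode

variable {κ : Cardinal.{u}}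

/-- The restriction `s↾β` of a node `s` to a domain `β ≤ dom s`. -/
noncomputable def restrict (s : KNode κ) (β : Ordinal.{u}) (h : β ≤ s.dom) : KNode κ where
  dom := β
  dom_lt := lt_of_le_of_lt h s.dom_lt
  val := fun i => if i < β then s.val i else 0
  val_lt := fun i hi => by
    simp only [if_pos hi]; exact s.val_lt i (lt_of_lt_of_le hi h)
  val_zero := fun i hi => if_neg hi

end KNode

/-- `p` is a subtree of `^{<κ}κ`: a nonempty set of nodes closed under restriction. -/
def IsSubtree {κ : Cardinal.{u}} (p : Set (KNode κ)) : Prop :=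
  p.Nonempty ∧ ∀ s ∈ p, ∀ (β : Ordinal.{u}) (h : β ≤ s.dom), s.restrict β h ∈ p

/-- The set `{α < κ : s⌢⟨α⟩ ∈ p}` of immediate successor values of `s` in `p`. -/
def succSet {κ : Cardinal.{u}} (p : Set (KNode κ)) (s : KNode κ) : Set Ordinal.{u} :=
  {a | ∃ t ∈ p, t.dom = s.dom + 1 ∧ (∀ i, i < s.dom → t.val i = s.val i) ∧ t.val s.dom = a}

/-- `s` is `F`-splitting in `p` if `{α < κ : s⌢⟨α⟩ ∈ p} ∈ F`. -/
def IsSplitting {κ : Cardinal.{u}} (F : Set (Set Ordinal.{u})) (p : Set (KNode κ))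
    (s : KNode κ) : Prop :=
  succSet p s ∈ F

/-- The splitting history `deg_p(s) = {i < dom s : ∃ t ∈ p, t↾i = s↾i ∧ t i ≠ s i}`. -/
def deg {κ : Cardinal.{u}} (p : Set (KNode κ)) (s : KNode κ) : Set Ordinal.{u} :=
  {i | i < s.dom ∧ ∃ t ∈ p, i < t.dom ∧ (∀ j, j < i → t.val j = s.val j) ∧ t.val i ≠ s.val i}

/-- `A` is a closed subset of the ordinal `δ` (in the order topology): every limit point
below `δ` of elements of `A` belongs to `A`. -/
def OrdClosedBelow (A : Set Ordinal.{u}) (δ : Ordinal.{u}) : Prop :=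
  ∀ β, β < δ → Order.IsSuccLimit β → (∀ γ, γ < β → ∃ i ∈ A, γ < i ∧ i < β) → β ∈ A

/-- `p` is an `F`-perfect subtree of `^{<κ}κ`. -/
def IsFPerfect (κ : Cardinal.{u}) (F : Set (Set Ordinal.{u})) (p : Set (KNode κ)) : Prop :=
  IsSubtree p ∧
  (∀ β, β < κ.ord → ∃ s ∈ p, β ≤ s.dom) ∧
  (∀ s ∈ p, ∃ t ∈ p, s.dom ≤ t.dom ∧ (∀ i, i < s.dom → t.val i = s.val i) ∧
    IsSplitting F p t) ∧
  (∀ s : KNode κ, Order.IsSuccLimit s.dom → (∀ β (h : β < s.dom), s.restrict β h.le ∈ p) → s ∈ p)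

/-- The forcing notion `P(F)`: `F`-perfect trees satisfying (o) every successor set is a
singleton or a member of `F`, and (i) every splitting history is closed. A condition `q`
is stronger than `p` (`q ≥ p`) iff `q ⊆ p`. -/
def PF (κ : Cardinal.{u}) (F : Set (Set Ordinal.{u})) : Set (Set (KNode κ)) :=
  {p | IsFPerfect κ F p ∧
    (∀ s ∈ p, (∃ a, succSet p s = {a}) ∨ succSet p s ∈ F) ∧
    (∀ s ∈ p, OrdClosedBelow (deg p s) s.dom)}

/-- Incompatibility of conditions in `P(F)`: no common extension. -/
def Incompat (κ : Cardinal.{u}) (F : Set (Set Ordinal.{u})) (p q : Set (KNode κ)) : Prop :=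
  ¬ ∃ r ∈ PF κ F, r ⊆ p ∧ r ⊆ q

/-- The co-bounded filter `F*_κ` on `κ`: sets `A ⊆ κ` with `|κ \ A| < κ`. -/
def cobounded (κ : Cardinal.{u}) : Set (Set Ordinal.{u}) :=
  {A | A ⊆ Set.Iio κ.ord ∧ #(↥(Set.Iio κ.ord \ A)) < Cardinal.lift.{u + 1} κ}

/-- `F` is a `(<κ)`-complete filter on `κ`. -/
def IsKappaCompleteFilterOn (κ : Cardinal.{u}) (F : Set (Set Ordinal.{u})) : Prop :=
  (∀ A ∈ F, A ⊆ Set.Iio κ.ord) ∧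
  Set.Iio κ.ord ∈ F ∧
  (∀ A ∈ F, ∀ B, A ⊆ B → B ⊆ Set.Iio κ.ord → B ∈ F) ∧
  (∀ (ι : Type u) (f : ι → Set Ordinal.{u}), Nonempty ι → #ι < κ →
    (∀ i, f i ∈ F) → (⋂ i, f i) ∈ F)

/-- `g : κ → κ` is a κ-branch of `q`: every restriction `g↾α`, `α < κ`, is a node of `q`. -/
def IsBranch {κ : Cardinal.{u}} (q : Set (KNode κ)) (g : Ordinal.{u} → Ordinal.{u}) : Prop :=
  ∀ α, α < κ.ord → ∃ s ∈ q, s.dom = α ∧ ∀ i, i < α → s.val i = g i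

/-- `C` is a club (closed unbounded set) in `δ`. -/
def IsClubBelow (C : Set Ordinal.{u}) (δ : Ordinal.{u}) : Prop :=
  C ⊆ Set.Iio δ ∧ (∀ β, β < δ → ∃ i ∈ C, β < i) ∧
  ∀ β, β < δ → Order.IsSuccLimit β → (∀ γ, γ < β → ∃ i ∈ C, γ < i ∧ i < β) → β ∈ C

/-- The dense set `D_f = {p ∈ P(F*_κ) : ∀ s ∈ p, ∀ i ∈ deg_p(s), s(i) > f(i)}`. -/
def Dset (κ : Cardinal.{u}) (f : Ordinal.{u} → Ordinal.{u}) : Set (Set (KNode κ)) :=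
  {p | p ∈ PF κ (cobounded κ) ∧ ∀ s ∈ p, ∀ i ∈ deg p s, f i < s.val i}

namespace KNode

variable {κ : Cardinal.{u}}

noncomputable def ofFun (δ : Ordinal.{u}) (hδ : δ < κ.ord) (v : Ordinal.{u} → Ordinal.{u})
    (hv : ∀ i, i < δ → v i < κ.ord) : KNode κ where
  dom := δ
  dom_lt := hδ
  val i := if i < δ then v i else 0
  val_lt i hi := by simpa only [if_pos hi] using hv i hi
  val_zero _ hi := if_neg hi

@[simp] lemma ofFun_dom (δ : Ordinal.{u}) (hδ : δ < κ.ord) (v hv) :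
    (ofFun (κ := κ) δ hδ v hv).dom = δ := rfl

@[simp] lemma ofFun_val (δ : Ordinal.{u}) (hδ : δ < κ.ord) (v hv) (i : Ordinal.{u}) :
    (ofFun (κ := κ) δ hδ v hv).val i = if i < δ then v i else 0 := rfl

@[simp] lemma restrict_dom (s : KNode κ) (β : Ordinal.{u}) (h : β ≤ s.dom) :
    (s.restrict β h).dom = β := rfl

lemma restrict_val_of_lt (s : KNode κ) {β i : Ordinal.{u}} (h : β ≤ s.dom) (hi : i < β) :
    (s.restrict β h).val i = s.val i := if_pos hi

end KNode

section AgreeTree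

variable {κ : Cardinal.{u}} {D : Set Ordinal.{u}} {c : Ordinal.{u} → Ordinal.{u}}

def agreeTree (κ : Cardinal.{u}) (D : Set Ordinal.{u}) (c : Ordinal.{u} → Ordinal.{u}) :
    Set (KNode κ) :=
  {s | ∀ i ∈ D, i < s.dom → s.val i = c i}

lemma ofFun_mem_agreeTree {δ : Ordinal.{u}} {hδ : δ < κ.ord} {v hv}
    (h : ∀ i ∈ D, i < δ → v i = c i) : KNode.ofFun δ hδ v hv ∈ agreeTree κ D c := by
  intro i hi hiδ
  simp only [KNode.ofFun_dom] at hiδ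
  simp only [KNode.ofFun_val, if_pos hiδ, h i hi hiδ]

lemma restrict_mem_agreeTree {s : KNode κ} (hs : s ∈ agreeTree κ D c) (β : Ordinal.{u})
    (h : β ≤ s.dom) : s.restrict β h ∈ agreeTree κ D c := fun i hi hiβ => by
  rw [KNode.restrict_val_of_lt s h hiβ]
  exact hs i hi (hiβ.trans_le h)

lemma succSet_agreeTree (hκ : ℵ₀ ≤ κ) {s : KNode κ} (hs : s ∈ agreeTree κ D c) :
    succSet (agreeTree κ D c) s = {a | a < κ.ord ∧ (s.dom ∈ D → a = c s.dom)} := by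
  ext a
  constructor
  · rintro ⟨t, ht, hdom, -, rfl⟩
    have hlt : s.dom < t.dom := hdom ▸ lt_add_one s.dom
    exact ⟨t.val_lt _ hlt, fun hD => ht _ hD hlt⟩
  · rintro ⟨ha, haD⟩
    refine ⟨KNode.ofFun (s.dom + 1) ((isSuccLimit_ord hκ).add_one_lt s.dom_lt)
      (fun i => if i < s.dom then s.val i else a)
      (fun i _ => by split_ifs; exacts [s.val_lt i ‹_›, ha]), ?_, rfl, ?_, ?_⟩
    · refine ofFun_mem_agreeTree fun i hi hi1 => ?_
      rcases (Order.lt_add_one_iff.1 hi1).lt_or_eq with hlt | rfl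
      · rw [if_pos hlt, hs i hi hlt]
      · rw [if_neg (lt_irrefl _), haD hi]
    · intro i hi
      simp [hi, hi.trans (lt_add_one s.dom)]
    · simp

lemma succSet_agreeTree_of_mem (hκ : ℵ₀ ≤ κ) (hc : ∀ i, c i < κ.ord) {s : KNode κ}
    (hs : s ∈ agreeTree κ D c) (hsD : s.dom ∈ D) :
    succSet (agreeTree κ D c) s = {c s.dom} := by
  ext a
  simp only [succSet_agreeTree hκ hs, hsD, forall_const, mem_ofPred_eq, mem_singleton_iff]
  exact ⟨And.right, fun h => ⟨h ▸ hc _, h⟩⟩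

lemma succSet_agreeTree_of_notMem (hκ : ℵ₀ ≤ κ) {s : KNode κ} (hs : s ∈ agreeTree κ D c)
    (hsD : s.dom ∉ D) : succSet (agreeTree κ D c) s = Iio κ.ord := by
  simp [succSet_agreeTree hκ hs, hsD, Iio]

lemma ofFun_mem_agreeTree_self {β : Ordinal.{u}} (hβ : β < κ.ord) (hc : ∀ i, c i < κ.ord) :
    KNode.ofFun β hβ c (fun i _ => hc i) ∈ agreeTree κ D c :=
  ofFun_mem_agreeTree fun _ _ _ => rfl

lemma isSubtree_agreeTree (hκ : ℵ₀ ≤ κ) (hc : ∀ i, c i < κ.ord) :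
    IsSubtree (agreeTree κ D c) :=
  ⟨⟨_, ofFun_mem_agreeTree_self (isSuccLimit_ord hκ).bot_lt hc⟩,
    fun _ hs β h => restrict_mem_agreeTree hs β h⟩

lemma exists_splitting_agreeTree {F : Set (Set Ordinal.{u})} (hκ : ℵ₀ ≤ κ)
    (hF : Iio κ.ord ∈ F) (hc : ∀ i, c i < κ.ord)
    (hDc : ∀ β < κ.ord, ∃ δ < κ.ord, β ≤ δ ∧ δ ∉ D) {s : KNode κ}
    (hs : s ∈ agreeTree κ D c) :
    ∃ t ∈ agreeTree κ D c, s.dom ≤ t.dom ∧ (∀ i, i < s.dom → t.val i = s.val i) ∧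
      IsSplitting F (agreeTree κ D c) t := by
  obtain ⟨δ, hδ, hsδ, hδD⟩ := hDc s.dom s.dom_lt
  have ht : KNode.ofFun δ hδ (fun i => if i < s.dom then s.val i else c i)
      (fun i _ => by split_ifs; exacts [s.val_lt i ‹_›, hc i]) ∈ agreeTree κ D c :=
    ofFun_mem_agreeTree fun i hi _ => by split_ifs with h; exacts [hs i hi h, rfl]
  refine ⟨_, ht, hsδ, fun i hi => by simp [hi, hi.trans_le hsδ], ?_⟩
  rwa [IsSplitting, succSet_agreeTree_of_notMem hκ ht hδD]

lemma ordClosedBelow_deg_agreeTree (hκ : ℵ₀ ≤ κ) (hD : ∀ i ∈ D, ¬ Order.IsSuccLimit i)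
    {s : KNode κ} (hs : s ∈ agreeTree κ D c) :
    OrdClosedBelow (deg (agreeTree κ D c) s) s.dom := by
  intro β hβ hlim _
  have hsβ := restrict_mem_agreeTree hs β hβ.le
  -- `β` is a limit, hence not in `D`, so `s↾β` also continues with the value `s β + 1`
  obtain ⟨t, ht, hdom, hagree, hval⟩ :
      s.val β + 1 ∈ succSet (agreeTree κ D c) (s.restrict β hβ.le) := by
    rw [succSet_agreeTree hκ hsβ]
    exact ⟨(isSuccLimit_ord hκ).add_one_lt (s.val_lt β hβ),
      fun hβD => absurd hlim (hD β hβD)⟩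
  refine ⟨hβ, t, ht, ?_, fun j hj => ?_, ?_⟩
  · simp [hdom]
  · rw [hagree j hj, KNode.restrict_val_of_lt s hβ.le hj]
  · rw [KNode.restrict_dom] at hval
    exact hval ▸ (lt_add_one _).ne'

theorem agreeTree_mem_PF {F : Set (Set Ordinal.{u})} (hκ : ℵ₀ ≤ κ) (hF : Iio κ.ord ∈ F)
    (hc : ∀ i, c i < κ.ord) (hD : ∀ i ∈ D, ¬ Order.IsSuccLimit i)
    (hDc : ∀ β < κ.ord, ∃ δ < κ.ord, β ≤ δ ∧ δ ∉ D) :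
    agreeTree κ D c ∈ PF κ F := by
  refine ⟨⟨isSubtree_agreeTree hκ hc,
    fun β hβ => ⟨_, ofFun_mem_agreeTree_self hβ hc, le_rfl⟩,
    fun s hs => exists_splitting_agreeTree hκ hF hc hDc hs, fun s hlim hres => ?_⟩,
    fun s hs => ?_, fun s hs => ordClosedBelow_deg_agreeTree hκ hD hs⟩
  · intro i hi his
    have hi1 : i + 1 < s.dom := hlim.add_one_lt his
    have := hres (i + 1) hi1 i hi (lt_add_one i)
    rwa [KNode.restrict_val_of_lt s hi1.le (lt_add_one i)] at this
  · by_cases hsD : s.dom ∈ D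
    · exact .inl ⟨c s.dom, succSet_agreeTree_of_mem hκ hc hs hsD⟩
    · exact .inr (succSet_agreeTree_of_notMem hκ hs hsD ▸ hF)

lemma incompat_agreeTree {F : Set (Set Ordinal.{u})} (hκ : ℵ₀ ≤ κ)
    {c' : Ordinal.{u} → Ordinal.{u}} {i : Ordinal.{u}} (hiD : i ∈ D) (hi : i < κ.ord)
    (hne : c i ≠ c' i) :
    Incompat κ F (agreeTree κ D c) (agreeTree κ D c') := by
  rintro ⟨r, hr, hrc, hrc'⟩
  obtain ⟨s, hs, his⟩ := hr.1.2.1 (i + 1) ((isSuccLimit_ord hκ).add_one_lt hi)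
  have his : i < s.dom := Order.add_one_le_iff.1 his
  exact hne ((hrc hs i hiD his).symm.trans (hrc' hs i hiD his))

end AgreeTree

lemma Iio_mem_cobounded {κ : Cardinal.{u}} (hκ : ℵ₀ ≤ κ) : Iio κ.ord ∈ cobounded κ :=
  ⟨subset_rfl, by simpa using aleph0_pos.trans_le hκ⟩

section OddCoding

open Ordinal

def oddOrdinals : Set Ordinal.{u} := range fun j => 2 * j + 1

lemma two_mul_add_one_injective : Function.Injective fun j : Ordinal.{u} => 2 * j + 1 :=
  fun _ _ h => mul_left_cancel₀ two_ne_zero (Order.succ_injective (by simpa using h))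

lemma not_isSuccLimit_of_mem_oddOrdinals {i : Ordinal.{u}} (hi : i ∈ oddOrdinals) :
    ¬ Order.IsSuccLimit i := by
  obtain ⟨j, rfl⟩ := hi
  simp

lemma two_mul_notMem_oddOrdinals (d : Ordinal.{u}) : 2 * d ∉ oddOrdinals := by
  rintro ⟨j, hj⟩
  rcases le_or_gt d j with h | h
  · exact (mul_le_mul_right h 2).not_gt (hj ▸ lt_add_one (2 * j))
  · have : 2 * j + 2 ≤ 2 * d := by
      simpa [mul_add] using mul_le_mul_right (Order.add_one_le_of_lt h) 2
    exact this.not_gt (hj ▸ (add_lt_add_iff_left (2 * j)).2 one_lt_two)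

open Classical in
noncomputable def oddCode (x : Set Ordinal.{u}) (i : Ordinal.{u}) : Ordinal.{u} :=
  if ∃ j ∈ x, i = 2 * j + 1 then 1 else 0

open Classical in
lemma oddCode_two_mul_add_one (x : Set Ordinal.{u}) (j : Ordinal.{u}) :
    oddCode x (2 * j + 1) = if j ∈ x then 1 else 0 := by
  unfold oddCode
  congr 1
  exact propext
    ⟨fun ⟨_, hk, h⟩ => two_mul_add_one_injective h ▸ hk, fun h => ⟨j, h, rfl⟩⟩

variable {κ : Cardinal.{u}}

lemma oddCode_lt_ord (hκ : ℵ₀ ≤ κ) (x : Set Ordinal.{u}) (i : Ordinal.{u}) :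
    oddCode x i < κ.ord := by
  have h0 : (0 : Ordinal) < κ.ord := (isSuccLimit_ord hκ).bot_lt
  unfold oddCode
  split_ifs
  exacts [by simpa using (isSuccLimit_ord hκ).add_one_lt h0, h0]

lemma two_mul_lt_ord (hκ : ℵ₀ ≤ κ) {j : Ordinal.{u}} (hj : j < κ.ord) : 2 * j < κ.ord :=
  isPrincipal_mul_ord hκ ((natCast_lt_omega0 2).trans_le (omega0_le_ord.2 hκ)) hj

lemma agreeTree_oddCode_mem_PF (hκ : ℵ₀ ≤ κ) {F : Set (Set Ordinal.{u})}
    (hF : Iio κ.ord ∈ F) (x : Set Ordinal.{u}) :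
    agreeTree κ oddOrdinals (oddCode x) ∈ PF κ F :=
  agreeTree_mem_PF hκ hF (oddCode_lt_ord hκ x) (fun _ => not_isSuccLimit_of_mem_oddOrdinals)
    fun β hβ =>
      ⟨2 * β, two_mul_lt_ord hκ hβ, le_mul_right β two_pos, two_mul_notMem_oddOrdinals β⟩

lemma incompat_agreeTree_oddCode (hκ : ℵ₀ ≤ κ) {F : Set (Set Ordinal.{u})}
    {x y : Set Ordinal.{u}} (hx : x ⊆ Iio κ.ord) (hy : y ⊆ Iio κ.ord) (hne : x ≠ y) :
    Incompat κ F (agreeTree κ oddOrdinals (oddCode x))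
      (agreeTree κ oddOrdinals (oddCode y)) := by
  obtain ⟨j, hj⟩ : ∃ j, ¬ (j ∈ x ↔ j ∈ y) := not_forall.1 (mt Set.ext hne)
  have hjκ : j < κ.ord := by
    by_cases hjx : j ∈ x
    exacts [hx hjx, hy (by tauto)]
  refine incompat_agreeTree hκ ⟨j, rfl⟩
    ((isSuccLimit_ord hκ).add_one_lt (two_mul_lt_ord hκ hjκ)) ?_
  rw [oddCode_two_mul_add_one, oddCode_two_mul_add_one]
  split_ifs <;> simp_all

theorem exists_antichain_PF_card_eq (hκ : ℵ₀ ≤ κ) {F : Set (Set Ordinal.{u})}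
    (hF : Iio κ.ord ∈ F) :
    ∃ A ⊆ PF κ F, A.Pairwise (Incompat κ F) ∧ #A = Cardinal.lift.{u + 1} (2 ^ κ) := by
  refine ⟨(fun x => agreeTree κ oddOrdinals (oddCode x)) '' 𝒫 Iio κ.ord,
    image_subset_iff.2 fun x _ => agreeTree_oddCode_mem_PF hκ hF x, ?_, ?_⟩
  · rintro _ ⟨x, hx, rfl⟩ _ ⟨y, hy, rfl⟩ hne
    exact incompat_agreeTree_oddCode hκ hx hy fun h => hne (h ▸ rfl)
  · rw [mk_image_eq_of_injOn, mk_powerset, Cardinal.mk_Iio_ordinal, card_ord, lift_two_power]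
    intro x hx y hy h
    by_contra hne
    exact incompat_agreeTree_oddCode hκ hx hy hne
      ⟨_, agreeTree_oddCode_mem_PF hκ hF x, subset_rfl, h.le⟩

end OddCoding

theorem stmt_1_general (κ : Cardinal.{u}) (hκ : ℵ₀ ≤ κ)
    (hcc : ∀ A : Set (Set (KNode κ)), A ⊆ PF κ (cobounded κ) →
      A.Pairwise (Incompat κ (cobounded κ)) →
      #A < Cardinal.lift.{u + 1} (Order.succ (Order.succ κ))) :
    2 ^ κ = Order.succ κ := by
  obtain ⟨A, hAP, hA, hcard⟩ := exists_antichain_PF_card_eq hκ (Iio_mem_cobounded hκ)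
  have hlt : 2 ^ κ < Order.succ (Order.succ κ) := lift_lt.1 (hcard ▸ hcc A hAP hA)
  exact le_antisymm (Order.lt_succ_iff.1 hlt) (Order.succ_le_of_lt (cantor κ))

/-- If `κ` is infinite with `κ^{<κ} = κ` and `P(F*_κ)` satisfies the
`κ^{++}`-chain condition, then `2^κ = κ^+`. -/
theorem stmt_1 (κ : Cardinal.{u}) (hκ : ℵ₀ ≤ κ) (hpow : κ ^< κ = κ)
    (hcc : ∀ A : Set (Set (KNode κ)), A ⊆ PF κ (cobounded κ) →
      A.Pairwise (Incompat κ (cobounded κ)) →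
      #A < Cardinal.lift.{u + 1} (Order.succ (Order.succ κ))) :
    2 ^ κ = Order.succ κ :=
  stmt_1_general κ hκ hcc
end

section
/- Assume κ is a regular uncountable cardinal with κ^{<κ} = κ. Let f : κ → κ, let q ∈ D_f, and let g ∈ [q] be a κ-branch of q. Then the set {i < κ : f(i) < g(i)} contains a club of κ. -/
open Cardinal Set

universe u

/-!
The club is the set of levels `i` at which the branch `g` splits in `q`: some node of `q`
agrees with `g` below `i` and differs from it at `i`. On these levels `f i < g i` because
`q ∈ D_f`. They are closed because splitting histories in `q` are closed, and unbounded because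
every node of `g` below any level extends to a node of `q` with cobounded successor set: either
that node already leaves `g`, or one of its successors does.
-/

variable {κ : Cardinal.{u}}

lemma exists_ne_of_mem_cobounded (hκ : ℵ₀ ≤ κ) {A : Set Ordinal.{u}} (hA : A ∈ cobounded κ)
    (x : Ordinal.{u}) : ∃ a ∈ A, a ≠ x := by
  by_contra! hAx
  have hcover : Iio κ.ord ⊆ (Iio κ.ord \ A) ∪ {x} := fun a ha => by
    by_cases haA : a ∈ A
    · exact Or.inr (hAx a haA)
    · exact Or.inl ⟨ha, haA⟩
  have hκ' : ℵ₀ ≤ lift.{u + 1} κ := aleph0_le_lift.mpr hκ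
  have : lift.{u + 1} κ < lift.{u + 1} κ :=
    calc lift.{u + 1} κ = #(Iio κ.ord) := by rw [mk_Iio_ordinal, card_ord]
      _ ≤ #↥((Iio κ.ord \ A) ∪ {x}) := mk_le_mk_of_subset hcover
      _ ≤ #↥(Iio κ.ord \ A) + 1 :=
        (mk_union_le (Iio κ.ord \ A) {x}).trans_eq (by rw [mk_singleton])
      _ < lift.{u + 1} κ := add_lt_of_lt hκ' hA.2 (one_lt_aleph0.trans_le hκ')
  exact this.false

lemma mem_deg_of_eqOn {p : Set (KNode κ)} {s s' : KNode κ} {i : Ordinal.{u}}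
    (hi : i ∈ deg p s) (his' : i < s'.dom) (hss' : ∀ j, j ≤ i → s'.val j = s.val j) :
    i ∈ deg p s' := by
  obtain ⟨-, t, ht, hit, hts, hti⟩ := hi
  exact ⟨his', t, ht, hit, fun j hj => (hts j hj).trans (hss' j hj.le).symm,
    by rwa [hss' i le_rfl]⟩

def splitLevels (p : Set (KNode κ)) (g : Ordinal.{u} → Ordinal.{u}) : Set Ordinal.{u} :=
  {i | ∃ s ∈ p, (∀ j, j < s.dom → s.val j = g j) ∧ i ∈ deg p s}

section splitLevels

variable {p : Set (KNode κ)} {g : Ordinal.{u} → Ordinal.{u}}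

lemma splitLevels_subset_Iio : splitLevels p g ⊆ Iio κ.ord := by
  rintro i ⟨s, -, -, hi, -⟩
  exact hi.trans s.dom_lt

lemma mem_splitLevels_of_deviation (hκ : ℵ₀ ≤ κ) (hg : IsBranch p g) {t : KNode κ} (ht : t ∈ p)
    {i : Ordinal.{u}} (hit : i < t.dom) (hagree : ∀ j, j < i → t.val j = g j)
    (hdev : t.val i ≠ g i) : i ∈ splitLevels p g := by
  obtain ⟨s, hs, hsdom, hsg⟩ := hg (i + 1) ((isSuccLimit_ord hκ).add_one_lt (hit.trans t.dom_lt))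
  have hsg' : ∀ j, j ≤ i → s.val j = g j := fun j hj => hsg j (Order.lt_add_one_iff.mpr hj)
  refine ⟨s, hs, fun j hj => hsg j (hsdom ▸ hj), hsdom ▸ Order.lt_add_one_iff.mpr le_rfl,
    t, ht, hit, fun j hj => (hagree j hj).trans (hsg' j hj.le).symm, ?_⟩
  rwa [hsg' i le_rfl]

lemma exists_mem_splitLevels_gt (hκ : ℵ₀ ≤ κ) (hp : IsFPerfect κ (cobounded κ) p)
    (hg : IsBranch p g) {β : Ordinal.{u}} (hβ : β < κ.ord) :
    ∃ i ∈ splitLevels p g, β < i := by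
  obtain ⟨s, hs, hsdom, hsg⟩ := hg (β + 1) ((isSuccLimit_ord hκ).add_one_lt hβ)
  obtain ⟨t, ht, hst, hts, htsplit⟩ := hp.2.2.1 s hs
  by_cases hdev : ∃ j, j < t.dom ∧ t.val j ≠ g j
  · obtain ⟨j, ⟨hjt, hjg⟩, hjmin⟩ := wellFounded_lt.has_min _ hdev
    have hagree : ∀ k, k < j → t.val k = g k := fun k hk => by
      by_contra hkg
      exact hjmin k ⟨hk.trans hjt, hkg⟩ hk
    refine ⟨j, mem_splitLevels_of_deviation hκ hg ht hjt hagree hjg, ?_⟩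
    -- `t` extends `s = g ↾ (β + 1)`, so it can only leave `g` above `β`
    by_contra! hjβ
    have hjs : j < s.dom := hsdom ▸ Order.lt_add_one_iff.mpr hjβ
    exact hjg ((hts j hjs).trans (hsg j (hsdom ▸ hjs)))
  · push Not at hdev
    obtain ⟨a, ⟨t', ht', ht'dom, ht't, rfl⟩, ha⟩ :=
      exists_ne_of_mem_cobounded hκ htsplit (g t.dom)
    refine ⟨t.dom, mem_splitLevels_of_deviation hκ hg ht'
      (ht'dom ▸ Order.lt_add_one_iff.mpr le_rfl) (fun j hj => (ht't j hj).trans (hdev j hj)) ha, ?_⟩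
    exact (Order.lt_add_one_iff.mpr le_rfl).trans_le (hsdom ▸ hst)

lemma mem_splitLevels_of_isSuccLimit (hκ : ℵ₀ ≤ κ)
    (hcl : ∀ s ∈ p, OrdClosedBelow (deg p s) s.dom) (hg : IsBranch p g) {β : Ordinal.{u}}
    (hβ : β < κ.ord) (hlim : Order.IsSuccLimit β)
    (hacc : ∀ γ, γ < β → ∃ i ∈ splitLevels p g, γ < i ∧ i < β) : β ∈ splitLevels p g := by
  obtain ⟨s, hs, hsdom, hsg⟩ := hg (β + 1) ((isSuccLimit_ord hκ).add_one_lt hβ)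
  have hsg' : ∀ j, j ≤ β → s.val j = g j := fun j hj => hsg j (Order.lt_add_one_iff.mpr hj)
  refine ⟨s, hs, fun j hj => hsg j (hsdom ▸ hj), ?_⟩
  refine hcl s hs β (hsdom ▸ Order.lt_add_one_iff.mpr le_rfl) hlim fun γ hγ => ?_
  obtain ⟨i, ⟨s', -, hs'g, hi⟩, hγi, hiβ⟩ := hacc γ hγ
  refine ⟨i, mem_deg_of_eqOn hi (hsdom ▸ Order.lt_add_one_iff.mpr hiβ.le) fun j hj => ?_,
    hγi, hiβ⟩
  rw [hsg' j (hj.trans hiβ.le), hs'g j (hj.trans_lt hi.1)]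

lemma isClubBelow_splitLevels (hκ : ℵ₀ ≤ κ) (hp : p ∈ PF κ (cobounded κ)) (hg : IsBranch p g) :
    IsClubBelow (splitLevels p g) κ.ord :=
  ⟨splitLevels_subset_Iio, fun _ hβ => exists_mem_splitLevels_gt hκ hp.1 hg hβ,
    fun _ hβ hlim hacc => mem_splitLevels_of_isSuccLimit hκ hp.2.2 hg hβ hlim hacc⟩

lemma splitLevels_subset_of_mem_Dset {f : Ordinal.{u} → Ordinal.{u}} (hp : p ∈ Dset κ f) :
    splitLevels p g ⊆ {i | f i < g i} := by
  rintro i ⟨s, hs, hsg, hi⟩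
  show f i < g i
  rw [← hsg i hi.1]
  exact hp.2 s hs i hi

end splitLevels

theorem stmt_5_general (κ : Cardinal.{u}) (huncount : ℵ₀ < κ)
    (f : Ordinal.{u} → Ordinal.{u})
    (q : Set (KNode κ)) (hq : q ∈ Dset κ f)
    (g : Ordinal.{u} → Ordinal.{u}) (hg : IsBranch q g) :
    ∃ C : Set Ordinal.{u}, IsClubBelow C κ.ord ∧ C ⊆ {i | f i < g i} :=
  ⟨splitLevels q g, isClubBelow_splitLevels huncount.le hq.1 hg, splitLevels_subset_of_mem_Dset hq⟩

/-- If `κ` is regular uncountable with `κ^{<κ} = κ`, `f : κ → κ`, `q ∈ D_f`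
and `g` is a κ-branch of `q`, then `{i < κ : f(i) < g(i)}` contains a club of `κ`. -/
theorem stmt_5 (κ : Cardinal.{u}) (hreg : κ.IsRegular) (huncount : ℵ₀ < κ)
    (hpow : κ ^< κ = κ)
    (f : Ordinal.{u} → Ordinal.{u}) (hf : ∀ i, i < κ.ord → f i < κ.ord)
    (q : Set (KNode κ)) (hq : q ∈ Dset κ f)
    (g : Ordinal.{u} → Ordinal.{u}) (hg : IsBranch q g) :
    ∃ C : Set Ordinal.{u}, IsClubBelow C κ.ord ∧ C ⊆ {i | f i < g i} :=
  stmt_5_general κ huncount f q hq g hg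
end
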